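/- arXiv:2402.08279 — 2 statements merged into one kernel-verified Lean document; each statement's English description precedes it below -/
import Mathlib

section
/- Let 𝔏 be a subspace lattice in a Banach space X. For a closed subspace K of X, the following are equivalent: (a) K is invariant under every rank-one operator in Alg(𝔏); (b) for every M ∈ 𝔏, either M ⊆ K or K ⊆ M₋; (c) there exists N ∈ 𝔏 with N ⊆ K ⊆ N₊ := ⋀{M₋ : M ∈ 𝔏, M ⊄ N}. -/
open ContinuousLinearMap

/-- The closed linear span (join) of a family of subspaces. -/
noncomputable def cJoin {X : Type*} [NormedAddCommGroup X] [NormedSpace ℂ X]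
    (S : Set (Submodule ℂ X)) : Submodule ℂ X :=
  (sSup S).topologicalClosure

/-- Join of two subspaces in the lattice of closed subspaces. -/
noncomputable def cJoin2 {X : Type*} [NormedAddCommGroup X] [NormedSpace ℂ X]
    (M N : Submodule ℂ X) : Submodule ℂ X :=
  (M ⊔ N).topologicalClosure

/-- A subspace lattice: a complete lattice of closed subspaces containing the trivial ones. -/
def IsSubspaceLattice {X : Type*} [NormedAddCommGroup X] [NormedSpace ℂ X]
    (L : Set (Submodule ℂ X)) : Prop :=
  (∀ M ∈ L, IsClosed (M : Set X)) ∧ ⊥ ∈ L ∧ ⊤ ∈ L ∧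
    ∀ S ⊆ L, cJoin S ∈ L ∧ sInf S ∈ L

/-- Alg(F): bounded operators leaving every member of F invariant. -/
def algOf {X : Type*} [NormedAddCommGroup X] [NormedSpace ℂ X]
    (L : Set (Submodule ℂ X)) : Set (X →L[ℂ] X) :=
  {A | ∀ M ∈ L, ∀ x ∈ M, A x ∈ M}

/-- Lat(T): closed subspaces invariant under every operator in T. -/
def latOf {X : Type*} [NormedAddCommGroup X] [NormedSpace ℂ X]
    (T : Set (X →L[ℂ] X)) : Set (Submodule ℂ X) :=
  {M | IsClosed (M : Set X) ∧ ∀ A ∈ T, ∀ x ∈ M, A x ∈ M}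

/-- The rank-one operator e ⊗ η : x ↦ η(x) • e. -/
noncomputable def rankOne {X : Type*} [NormedAddCommGroup X] [NormedSpace ℂ X]
    (e : X) (η : X →L[ℂ] ℂ) : X →L[ℂ] X :=
  η.smulRight e

/-- The rank-one operators in a set of operators. -/
noncomputable def Rk1 {X : Type*} [NormedAddCommGroup X] [NormedSpace ℂ X]
    (T : Set (X →L[ℂ] X)) : Set (X →L[ℂ] X) :=
  {A ∈ T | ∃ (e : X) (η : X →L[ℂ] ℂ), e ≠ 0 ∧ η ≠ 0 ∧ A = rankOne e η}

/-- M₋ = ⋁{K ∈ L : M ⊄ K}. -/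
noncomputable def mMinus {X : Type*} [NormedAddCommGroup X] [NormedSpace ℂ X]
    (L : Set (Submodule ℂ X)) (M : Submodule ℂ X) : Submodule ℂ X :=
  cJoin {K | K ∈ L ∧ ¬ M ≤ K}

/-- M₊ = ⋀{K ∈ L : K ⊄ M}. -/
noncomputable def mPlus {X : Type*} [NormedAddCommGroup X] [NormedSpace ℂ X]
    (L : Set (Submodule ℂ X)) (M : Submodule ℂ X) : Submodule ℂ X :=
  sInf {K | K ∈ L ∧ ¬ K ≤ M}

/-- N_* = ⋀{M₋ : M ∈ L, M ⊄ N}. -/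
noncomputable def nStar {X : Type*} [NormedAddCommGroup X] [NormedSpace ℂ X]
    (L : Set (Submodule ℂ X)) (N : Submodule ℂ X) : Submodule ℂ X :=
  sInf {P | ∃ M, M ∈ L ∧ ¬ M ≤ N ∧ P = mMinus L M}

/-- The cyclic subspace [Alg(L)x]: closed linear span of the orbit of x under Alg(L). -/
noncomputable def cyclicSubspace {X : Type*} [NormedAddCommGroup X] [NormedSpace ℂ X]
    (L : Set (Submodule ℂ X)) (x : X) : Submodule ℂ X :=
  (Submodule.span ℂ ((fun A : X →L[ℂ] X => A x) '' algOf L)).topologicalClosure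

/-- The pinch points of a family of subspaces. -/
def pinOf {X : Type*} [NormedAddCommGroup X] [NormedSpace ℂ X]
    (L : Set (Submodule ℂ X)) : Set (Submodule ℂ X) :=
  {P | P ∈ L ∧ ∀ M ∈ L, M ≤ P ∨ P ≤ M}



/-!
A rank-one operator `e ⊗ η` lies in `Alg 𝔏` exactly when, for some `N ∈ 𝔏`, `e ∈ N` and `η`
vanishes on `N₋`; one may take `N` to be the least member of `𝔏` containing `e`. Hence if
`M ⊄ K` and `K ⊄ M₋`, a vector `e ∈ M \ K` and a functional `η` killing `M₋` but not some
`x ∈ K` (Hahn–Banach) give an operator of `Rk1 (Alg 𝔏)` moving `x ∈ K` to `η x • e ∉ K`;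
conversely the dichotomy `N ⊆ K` or `K ⊆ N₋` for that least `N` keeps `η x • e` in `K`.
Condition (c) is the dichotomy read at `N = ⋁ {M ∈ 𝔏 : M ⊆ K}`.
-/

theorem exists_dual_eq_zero_ne_zero_of_notMem {𝕜 X : Type*} [RCLike 𝕜] [NormedAddCommGroup X]
    [NormedSpace 𝕜 X] {S : Submodule 𝕜 X} (hS : IsClosed (S : Set X)) {x : X} (hx : x ∉ S) :
    ∃ η : X →L[𝕜] 𝕜, (∀ y ∈ S, η y = 0) ∧ η x ≠ 0 := by
  have := hS -- makes `X ⧸ S` a normed (Hausdorff) space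
  have hx' : S.mkQL x ≠ 0 := by simpa [Submodule.Quotient.mk_eq_zero] using hx
  obtain ⟨f, hf⟩ := SeparatingDual.exists_ne_zero (R := 𝕜) hx'
  exact ⟨f.comp S.mkQL, fun y hy => by simp [(Submodule.Quotient.mk_eq_zero S).2 hy], hf⟩

section SubspaceLattice

variable {X : Type*} [NormedAddCommGroup X] [NormedSpace ℂ X] {L : Set (Submodule ℂ X)}

theorem le_cJoin {S : Set (Submodule ℂ X)} {M : Submodule ℂ X} (hM : M ∈ S) : M ≤ cJoin S :=
  (le_sSup hM).trans (Submodule.le_topologicalClosure _)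

theorem cJoin_le {S : Set (Submodule ℂ X)} {P : Submodule ℂ X} (hP : IsClosed (P : Set X))
    (h : ∀ M ∈ S, M ≤ P) : cJoin S ≤ P :=
  Submodule.topologicalClosure_minimal _ (sSup_le h) hP

theorem isClosed_mMinus (M : Submodule ℂ X) : IsClosed (mMinus L M : Set X) :=
  Submodule.isClosed_topologicalClosure _

theorem le_mMinus {M K : Submodule ℂ X} (hK : K ∈ L) (h : ¬ M ≤ K) : K ≤ mMinus L M :=
  le_cJoin ⟨hK, h⟩

theorem nStar_le_mMinus {M N : Submodule ℂ X} (hM : M ∈ L) (h : ¬ M ≤ N) :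
    nStar L N ≤ mMinus L M :=
  sInf_le ⟨M, hM, h, rfl⟩

theorem le_nStar {N P : Submodule ℂ X} (h : ∀ M ∈ L, ¬ M ≤ N → P ≤ mMinus L M) :
    P ≤ nStar L N :=
  le_sInf fun _ ⟨M, hM, hMN, hP⟩ => hP ▸ h M hM hMN

theorem rankOne_apply (e x : X) (η : X →L[ℂ] ℂ) : rankOne e η x = η x • e := rfl

theorem rankOne_mem_algOf {N : Submodule ℂ X} {e : X} {η : X →L[ℂ] ℂ} (he : e ∈ N)
    (hη : ∀ x ∈ mMinus L N, η x = 0) : rankOne e η ∈ algOf L := by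
  intro M hM x hx
  rw [rankOne_apply]
  by_cases hNM : N ≤ M
  · exact M.smul_mem _ (hNM he)
  · rw [hη x (le_mMinus hM hNM hx), zero_smul]
    exact M.zero_mem

theorem mem_of_rankOne_mem_algOf {M : Submodule ℂ X} {e x : X} {η : X →L[ℂ] ℂ}
    (hA : rankOne e η ∈ algOf L) (hM : M ∈ L) (hx : x ∈ M) (hηx : η x ≠ 0) : e ∈ M :=
  (M.smul_mem_iff hηx).1 (hA M hM x hx)

theorem exists_eq_zero_on_mMinus_of_rankOne_mem_algOf (hInf : ∀ S ⊆ L, sInf S ∈ L) {e : X}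
    {η : X →L[ℂ] ℂ} (hA : rankOne e η ∈ algOf L) :
    ∃ N ∈ L, e ∈ N ∧ ∀ x ∈ mMinus L N, η x = 0 := by
  let N := sInf {M | M ∈ L ∧ e ∈ M}
  have hN : N ∈ L := hInf _ fun _ hM => hM.1
  have heN : e ∈ N := Submodule.mem_sInf.2 fun _ hM => hM.2
  refine ⟨N, hN, heN, fun x hx => ?_⟩
  have hker : mMinus L N ≤ LinearMap.ker (η : X →ₗ[ℂ] ℂ) := by
    refine cJoin_le (isClosed_ker η) fun M ⟨hM, hNM⟩ y hy => ?_
    by_contra hηy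
    exact hNM (sInf_le ⟨hM, mem_of_rankOne_mem_algOf hA hM hy hηy⟩)
  exact hker hx

theorem le_or_le_mMinus_of_mem_latOf {K : Submodule ℂ X} (hK : K ∈ latOf (Rk1 (algOf L)))
    (M : Submodule ℂ X) : M ≤ K ∨ K ≤ mMinus L M := by
  refine or_iff_not_imp_left.2 fun hMK x hxK => ?_
  by_contra hx
  obtain ⟨e, heM, heK⟩ := SetLike.not_le_iff_exists.1 hMK
  obtain ⟨η, hη, hηx⟩ := exists_dual_eq_zero_ne_zero_of_notMem (isClosed_mMinus M) hx
  have he : e ≠ 0 := fun h => heK (h ▸ K.zero_mem)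
  have hη0 : η ≠ 0 := fun h => hηx (by simp [h])
  have hA : rankOne e η ∈ Rk1 (algOf L) := ⟨rankOne_mem_algOf heM hη, e, η, he, hη0, rfl⟩
  exact heK ((K.smul_mem_iff hηx).1 (hK.2 _ hA x hxK))

theorem mem_latOf_of_le_or_le_mMinus (hInf : ∀ S ⊆ L, sInf S ∈ L) {K : Submodule ℂ X}
    (hK : IsClosed (K : Set X)) (hb : ∀ M ∈ L, M ≤ K ∨ K ≤ mMinus L M) :
    K ∈ latOf (Rk1 (algOf L)) := by
  refine ⟨hK, ?_⟩
  rintro _ ⟨hA, e, η, -, -, rfl⟩ x hx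
  obtain ⟨N, hN, heN, hη⟩ := exists_eq_zero_on_mMinus_of_rankOne_mem_algOf hInf hA
  rw [rankOne_apply]
  rcases hb N hN with hNK | hKN
  · exact K.smul_mem _ (hNK heN)
  · rw [hη x (hKN hx), zero_smul]
    exact K.zero_mem

theorem exists_le_le_nStar_of_le_or_le_mMinus (hJoin : ∀ S ⊆ L, cJoin S ∈ L)
    {K : Submodule ℂ X} (hK : IsClosed (K : Set X)) (hb : ∀ M ∈ L, M ≤ K ∨ K ≤ mMinus L M) :
    ∃ N ∈ L, N ≤ K ∧ K ≤ nStar L N := by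
  refine ⟨cJoin {M | M ∈ L ∧ M ≤ K}, hJoin _ fun _ hM => hM.1, cJoin_le hK fun _ hM => hM.2,
    le_nStar fun M hM hMN => ?_⟩
  exact (hb M hM).resolve_left fun hMK => hMN (le_cJoin ⟨hM, hMK⟩)

theorem le_or_le_mMinus_of_le_nStar {K M N : Submodule ℂ X} (hNK : N ≤ K)
    (hKN : K ≤ nStar L N) (hM : M ∈ L) : M ≤ K ∨ K ≤ mMinus L M := by
  by_cases hMN : M ≤ N
  · exact Or.inl (hMN.trans hNK)
  · exact Or.inr (hKN.trans (nStar_le_mMinus hM hMN))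

end SubspaceLattice

theorem mem_lat_rankOne_iff_general
    {X : Type*} [NormedAddCommGroup X] [NormedSpace ℂ X]
    (L : Set (Submodule ℂ X)) (hL : IsSubspaceLattice L)
    (K : Submodule ℂ X) (hK : IsClosed (K : Set X)) :
    (K ∈ latOf (Rk1 (algOf L)) ↔ ∀ M ∈ L, M ≤ K ∨ K ≤ mMinus L M) ∧
    (K ∈ latOf (Rk1 (algOf L)) ↔ ∃ N ∈ L, N ≤ K ∧ K ≤ nStar L N) := by
  have hJoin : ∀ S ⊆ L, cJoin S ∈ L := fun S hS => (hL.2.2.2 S hS).1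
  have hInf : ∀ S ⊆ L, sInf S ∈ L := fun S hS => (hL.2.2.2 S hS).2
  have hab : K ∈ latOf (Rk1 (algOf L)) ↔ ∀ M ∈ L, M ≤ K ∨ K ≤ mMinus L M :=
    ⟨fun hKlat M _ => le_or_le_mMinus_of_mem_latOf hKlat M,
      mem_latOf_of_le_or_le_mMinus hInf hK⟩
  have hbc : (∀ M ∈ L, M ≤ K ∨ K ≤ mMinus L M) ↔ ∃ N ∈ L, N ≤ K ∧ K ≤ nStar L N :=
    ⟨exists_le_le_nStar_of_le_or_le_mMinus hJoin hK,
      fun ⟨_, _, hNK, hKN⟩ _ hM => le_or_le_mMinus_of_le_nStar hNK hKN hM⟩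
  exact ⟨hab, hab.trans hbc⟩

/-- Characterization of the closed subspaces invariant under all rank-one operators of Alg(𝔏). -/
theorem mem_lat_rankOne_iff
    {X : Type*} [NormedAddCommGroup X] [NormedSpace ℂ X] [CompleteSpace X]
    (L : Set (Submodule ℂ X)) (hL : IsSubspaceLattice L)
    (K : Submodule ℂ X) (hK : IsClosed (K : Set X)) :
    (K ∈ latOf (Rk1 (algOf L)) ↔ ∀ M ∈ L, M ≤ K ∨ K ≤ mMinus L M) ∧
    (K ∈ latOf (Rk1 (algOf L)) ↔ ∃ N ∈ L, N ≤ K ∧ K ≤ nStar L N) :=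
  mem_lat_rankOne_iff_general L hL K hK
end

section
/- Let 𝔅 be an atomic Boolean subspace lattice. If K is an atom of 𝔅 then K₋ = K' = ⋁{L ∈ 𝔅ₐ : L ≠ K}; and if M ∈ 𝔅 is nonzero and not an atom, then M₋ = X. -/
open ContinuousLinearMap

/-- An atom of a subspace lattice: a nontrivial minimal element. -/
def IsLatAtom {X : Type*} [NormedAddCommGroup X] [NormedSpace ℂ X]
    (L : Set (Submodule ℂ X)) (K : Submodule ℂ X) : Prop :=
  K ∈ L ∧ K ≠ ⊥ ∧ K ≠ ⊤ ∧ ∀ B ∈ L, B ≤ K → B = ⊥ ∨ B = K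

/-- A Boolean subspace lattice with complementation map `c`: distributive and
(uniquely) complemented. -/
def IsBooleanSubspaceLattice {X : Type*} [NormedAddCommGroup X] [NormedSpace ℂ X]
    (L : Set (Submodule ℂ X)) (c : Submodule ℂ X → Submodule ℂ X) : Prop :=
  IsSubspaceLattice L ∧
  (∀ M ∈ L, ∀ N ∈ L, ∀ K ∈ L, M ⊓ cJoin2 N K = cJoin2 (M ⊓ N) (M ⊓ K)) ∧
  (∀ M ∈ L, ∀ N ∈ L, ∀ K ∈ L, cJoin2 M (N ⊓ K) = cJoin2 M N ⊓ cJoin2 M K) ∧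
  (∀ M ∈ L, c M ∈ L ∧ M ⊓ c M = ⊥ ∧ cJoin2 M (c M) = ⊤) ∧
  (∀ M ∈ L, ∀ N ∈ L, M ⊓ N = ⊥ → cJoin2 M N = ⊤ → N = c M)

/-- An atomic Boolean subspace lattice: every element is the join of the atoms below it. -/
def IsAtomicBooleanSubspaceLattice {X : Type*} [NormedAddCommGroup X] [NormedSpace ℂ X]
    (L : Set (Submodule ℂ X)) (c : Submodule ℂ X → Submodule ℂ X) : Prop :=
  IsBooleanSubspaceLattice L c ∧
  ∀ M ∈ L, M = cJoin {K | IsLatAtom L K ∧ K ≤ M}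

/-!
For an atom K, an element N of the lattice with K ⊄ N meets K in 0, so distributivity puts N
under K'; K' is the join of the atoms below it, none of which is K; and no atom other than K
contains K. Hence K₋ ≤ K' ≤ ⋁{atoms ≠ K} ≤ K₋. If M is neither 0 nor an atom, then no atom
contains M, so M₋ contains the join of all atoms, which is X.
-/

section SubspaceLattice

variable {X : Type*} [NormedAddCommGroup X] [NormedSpace ℂ X]

theorem cJoin_mono {S T : Set (Submodule ℂ X)} (hST : S ⊆ T) : cJoin S ≤ cJoin T :=
  Submodule.topologicalClosure_mono (sSup_le_sSup hST)

theorem cJoin_le_s12 {S : Set (Submodule ℂ X)} {N : Submodule ℂ X} (hN : IsClosed (N : Set X))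
    (hS : ∀ K ∈ S, K ≤ N) : cJoin S ≤ N :=
  Submodule.topologicalClosure_minimal _ (sSup_le hS) hN

theorem cJoin2_bot_left {N : Submodule ℂ X} (hN : IsClosed (N : Set X)) : cJoin2 ⊥ N = N := by
  rw [cJoin2, bot_sup_eq]
  exact hN.submodule_topologicalClosure_eq

theorem IsSubspaceLattice.inf_mem {L : Set (Submodule ℂ X)} (hL : IsSubspaceLattice L)
    {M N : Submodule ℂ X} (hM : M ∈ L) (hN : N ∈ L) : M ⊓ N ∈ L := by
  simpa only [sInf_pair] using (hL.2.2.2 {M, N} (Set.pair_subset hM hN)).2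

theorem IsLatAtom.inf_eq_bot_of_not_le {L : Set (Submodule ℂ X)} (hL : IsSubspaceLattice L)
    {K N : Submodule ℂ X} (hK : IsLatAtom L K) (hN : N ∈ L) (hKN : ¬ K ≤ N) : K ⊓ N = ⊥ :=
  (hK.2.2.2 _ (hL.inf_mem hK.1 hN) inf_le_left).resolve_right fun h => hKN (inf_eq_left.mp h)

theorem IsLatAtom.not_le_of_ne {L : Set (Submodule ℂ X)} {K P : Submodule ℂ X}
    (hK : IsLatAtom L K) (hP : IsLatAtom L P) (hPK : P ≠ K) : ¬ K ≤ P := fun hKP =>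
  hPK ((hP.2.2.2 K hK.1 hKP).resolve_left hK.2.1).symm

theorem cJoin_atoms_ne_le_mMinus {L : Set (Submodule ℂ X)} {K : Submodule ℂ X}
    (hK : IsLatAtom L K) : cJoin {P | IsLatAtom L P ∧ P ≠ K} ≤ mMinus L K :=
  cJoin_mono fun _ ⟨hP, hPK⟩ => ⟨hP.1, hK.not_le_of_ne hP hPK⟩

theorem IsLatAtom.not_le_of_not_isLatAtom {L : Set (Submodule ℂ X)} {M P : Submodule ℂ X}
    (hM : M ∈ L) (hM₀ : M ≠ ⊥) (hMa : ¬ IsLatAtom L M) (hP : IsLatAtom L P) : ¬ M ≤ P :=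
  fun hMP => ((hP.2.2.2 M hM hMP).elim hM₀) fun h => hMa (h ▸ hP)

end SubspaceLattice

namespace IsBooleanSubspaceLattice

variable {X : Type*} [NormedAddCommGroup X] [NormedSpace ℂ X]
  {L : Set (Submodule ℂ X)} {c : Submodule ℂ X → Submodule ℂ X}

theorem le_compl_of_inf_eq_bot (hB : IsBooleanSubspaceLattice L c) {M N : Submodule ℂ X}
    (hM : M ∈ L) (hN : N ∈ L) (hMN : M ⊓ N = ⊥) : N ≤ c M := by
  obtain ⟨hcM, -, hjoin⟩ := hB.2.2.2.1 M hM
  have hclosed : IsClosed ((N ⊓ c M : Submodule ℂ X) : Set X) :=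
    (hB.1.1 N hN).inter (hB.1.1 _ hcM)
  calc N = N ⊓ cJoin2 M (c M) := by rw [hjoin, inf_top_eq]
    _ = cJoin2 (N ⊓ M) (N ⊓ c M) := hB.2.1 N hN M hM (c M) hcM
    _ = N ⊓ c M := by rw [inf_comm N M, hMN, cJoin2_bot_left hclosed]
    _ ≤ c M := inf_le_right

theorem not_le_compl (hB : IsBooleanSubspaceLattice L c) {K : Submodule ℂ X} (hK : K ∈ L)
    (hK₀ : K ≠ ⊥) : ¬ K ≤ c K := fun hle =>
  hK₀ (by rw [← (hB.2.2.2.1 K hK).2.1, inf_eq_left.mpr hle])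

theorem mMinus_le_compl (hB : IsBooleanSubspaceLattice L c) {K : Submodule ℂ X}
    (hK : IsLatAtom L K) : mMinus L K ≤ c K :=
  cJoin_le_s12 (hB.1.1 _ (hB.2.2.2.1 K hK.1).1) fun _ ⟨hN, hKN⟩ =>
    hB.le_compl_of_inf_eq_bot hK.1 hN (hK.inf_eq_bot_of_not_le hB.1 hN hKN)

end IsBooleanSubspaceLattice

namespace IsAtomicBooleanSubspaceLattice

variable {X : Type*} [NormedAddCommGroup X] [NormedSpace ℂ X]
  {L : Set (Submodule ℂ X)} {c : Submodule ℂ X → Submodule ℂ X}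

theorem compl_le_cJoin_atoms_ne (hB : IsAtomicBooleanSubspaceLattice L c) {K : Submodule ℂ X}
    (hK : IsLatAtom L K) : c K ≤ cJoin {P | IsLatAtom L P ∧ P ≠ K} := by
  rw [hB.2 (c K) (hB.1.2.2.2.1 K hK.1).1]
  exact cJoin_mono fun P ⟨hP, hPK⟩ =>
    ⟨hP, fun h => hB.1.not_le_compl hK.1 hK.2.1 (h ▸ hPK)⟩

end IsAtomicBooleanSubspaceLattice

theorem atom_minus_eq_complement_general
    {X : Type*} [NormedAddCommGroup X] [NormedSpace ℂ X]
    (L : Set (Submodule ℂ X)) (c : Submodule ℂ X → Submodule ℂ X)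
    (hB : IsAtomicBooleanSubspaceLattice L c) :
    (∀ K, IsLatAtom L K →
      mMinus L K = c K ∧ c K = cJoin {P | IsLatAtom L P ∧ P ≠ K}) ∧
    (∀ M ∈ L, M ≠ ⊥ → ¬ IsLatAtom L M → mMinus L M = ⊤) := by
  refine ⟨fun K hK => ?_, fun M hM hM₀ hMa => ?_⟩
  · have h₁ := hB.1.mMinus_le_compl hK
    have h₂ := hB.compl_le_cJoin_atoms_ne hK
    have h₃ := cJoin_atoms_ne_le_mMinus hK
    exact ⟨le_antisymm h₁ (h₂.trans h₃), le_antisymm h₂ (h₃.trans h₁)⟩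
  · refine eq_top_iff.mpr ?_
    calc ⊤ = cJoin {K | IsLatAtom L K ∧ K ≤ ⊤} := hB.2 ⊤ hB.1.1.2.2.1
      _ ≤ mMinus L M := cJoin_mono fun P ⟨hP, _⟩ =>
        ⟨hP.1, hP.not_le_of_not_isLatAtom hM hM₀ hMa⟩

/-- In an atomic Boolean subspace lattice: for an atom K, K₋ = K' = ⋁{L ∈ 𝔅ₐ : L ≠ K};
for a nonzero non-atom M, M₋ = X. -/
theorem atom_minus_eq_complement
    {X : Type*} [NormedAddCommGroup X] [NormedSpace ℂ X] [CompleteSpace X]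
    (L : Set (Submodule ℂ X)) (c : Submodule ℂ X → Submodule ℂ X)
    (hB : IsAtomicBooleanSubspaceLattice L c) :
    (∀ K, IsLatAtom L K →
      mMinus L K = c K ∧ c K = cJoin {P | IsLatAtom L P ∧ P ≠ K}) ∧
    (∀ M ∈ L, M ≠ ⊥ → ¬ IsLatAtom L M → mMinus L M = ⊤) :=
  atom_minus_eq_complement_general L c hB
end
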